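/- arXiv:2012.14121 — 14 statements merged into one kernel-verified Lean document; each statement's English description precedes it below -/
import Mathlib

section
/- Let K be a nonempty set and f, g : K → [0,∞) with g⁻¹(0) ⊆ f⁻¹(0). If for every ε > 0 there exists δ > 0 such that x ∈ K and ε ≤ g(x) < ε + δ imply f(x) < ε, then for every ε > 0 there exists δ > 0 such that x ∈ K and g(x) < ε + δ imply f(x) < ε. -/
open scoped NNReal ENNReal

theorem apply_lt_apply_of_forall_Ico {K : Type*} {f g : K → ℝ≥0}
    (hMK : ∀ ε : ℝ≥0, 0 < ε → ∃ δ : ℝ≥0, 0 < δ ∧ ∀ x, ε ≤ g x → g x < ε + δ → f x < ε)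
    {x : K} (hx : 0 < g x) : f x < g x := by
  obtain ⟨δ, hδ, h⟩ := hMK (g x) hx
  exact h x le_rfl (lt_add_of_pos_right _ hδ)

theorem MK_implies_strong_general {K : Type*} (f g : K → ℝ≥0)
    (h0 : ∀ x, g x = 0 → f x = 0)
    (hMK : ∀ ε : ℝ≥0, 0 < ε → ∃ δ : ℝ≥0, 0 < δ ∧
      ∀ x, ε ≤ g x → g x < ε + δ → f x < ε) :
    ∀ ε : ℝ≥0, 0 < ε → ∃ δ : ℝ≥0, 0 < δ ∧ ∀ x, g x < ε + δ → f x < ε := by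
  intro ε hε
  obtain ⟨δ, hδ, h⟩ := hMK ε hε
  refine ⟨δ, hδ, fun x hx => ?_⟩
  rcases le_or_gt ε (g x) with hεg | hgε
  · exact h x hεg hx
  rcases eq_zero_or_pos (g x) with hg | hg
  · rw [h0 x hg]
    exact hε
  · exact (apply_lt_apply_of_forall_Ico hMK hg).trans hgε

theorem MK_implies_strong {K : Type*} [Nonempty K] (f g : K → ℝ≥0)
    (h0 : ∀ x, g x = 0 → f x = 0)
    (hMK : ∀ ε : ℝ≥0, 0 < ε → ∃ δ : ℝ≥0, 0 < δ ∧
      ∀ x, ε ≤ g x → g x < ε + δ → f x < ε) :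
    ∀ ε : ℝ≥0, 0 < ε → ∃ δ : ℝ≥0, 0 < δ ∧ ∀ x, g x < ε + δ → f x < ε :=
  MK_implies_strong_general f g h0 hMK
end

section
/- Let K be a nonempty set and f, g : K → [0,∞). If for every ε > 0 there exists δ > 0 such that x ∈ K and g(x) < ε + δ imply f(x) < ε, then there exists a nondecreasing function γ : [0,∞) → [0,∞] with γ(s) > s for all s > 0 and γ(f(x)) ≤ g(x) for all x ∈ K. -/
open scoped NNReal ENNReal

/-!
Take `γ s` to be the infimum of `g` over the superlevel set `{x | s ≤ f x}`. It is monotone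
because the superlevel sets shrink as `s` grows, and `γ (f x) ≤ g x` since `x` lies in its own
superlevel set. For `s > 0`, the hypothesis with `ε = s` says exactly that every point of
`{x | s ≤ f x}` has `g x ≥ s + δ`, so `γ s ≥ s + δ > s`.
-/

noncomputable def superlevelInf {K α : Type*} [Preorder α] (f : K → α) (g : K → ℝ≥0) (s : α) :
    ℝ≥0∞ :=
  ⨅ (x : K) (_ : s ≤ f x), (g x : ℝ≥0∞)

section superlevelInf

variable {K α : Type*} [Preorder α] (f : K → α) (g : K → ℝ≥0)

theorem monotone_superlevelInf : Monotone (superlevelInf f g) :=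
  fun _ _ hst => le_iInf₂ fun x hx => iInf₂_le x (hst.trans hx)

theorem superlevelInf_apply_le (x : K) : superlevelInf f g (f x) ≤ g x :=
  iInf₂_le x (le_refl (f x))

end superlevelInf

theorem coe_add_le_superlevelInf {K : Type*} {f g : K → ℝ≥0} {s δ : ℝ≥0}
    (hδ : ∀ x, g x < s + δ → f x < s) : ((s + δ : ℝ≥0) : ℝ≥0∞) ≤ superlevelInf f g s :=
  le_iInf₂ fun x hsx => ENNReal.coe_le_coe.2 (not_lt.1 fun hgx => (hδ x hgx).not_ge hsx)

theorem strong_implies_gamma_general {K : Type*} (f g : K → ℝ≥0)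
    (h : ∀ ε : ℝ≥0, 0 < ε → ∃ δ : ℝ≥0, 0 < δ ∧ ∀ x, g x < ε + δ → f x < ε) :
    ∃ γ : ℝ≥0 → ℝ≥0∞, Monotone γ ∧ (∀ s : ℝ≥0, 0 < s → (s : ℝ≥0∞) < γ s) ∧
      ∀ x, γ (f x) ≤ (g x : ℝ≥0∞) := by
  refine ⟨superlevelInf f g, monotone_superlevelInf f g, fun s hs => ?_,
    superlevelInf_apply_le f g⟩
  obtain ⟨δ, hδ_pos, hδ⟩ := h s hs
  calc (s : ℝ≥0∞) < ((s + δ : ℝ≥0) : ℝ≥0∞) := by exact_mod_cast lt_add_of_pos_right s hδ_pos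
    _ ≤ superlevelInf f g s := coe_add_le_superlevelInf hδ

theorem strong_implies_gamma {K : Type*} [Nonempty K] (f g : K → ℝ≥0)
    (h : ∀ ε : ℝ≥0, 0 < ε → ∃ δ : ℝ≥0, 0 < δ ∧ ∀ x, g x < ε + δ → f x < ε) :
    ∃ γ : ℝ≥0 → ℝ≥0∞, Monotone γ ∧ (∀ s : ℝ≥0, 0 < s → (s : ℝ≥0∞) < γ s) ∧
      ∀ x, γ (f x) ≤ (g x : ℝ≥0∞) :=
  strong_implies_gamma_general f g h
end

section
/- Let K be a nonempty set and f, g : K → [0,∞). If there exists a nondecreasing function γ : [0,∞) → [0,∞] with γ(s) > s for all s > 0 and γ(f(x)) ≤ g(x) for all x ∈ K, then there exists a function w : [0,∞) → [0,∞) with w(s) > s for all s > 0, w right lower semicontinuous on (0,∞), and w(f(x)) ≤ g(x) for all x ∈ K. -/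
/-!
Capping `γ` by `t ↦ t + 1` makes it finite without losing `s < γ s` (as `s < s + 1`) or
`γ (f x) ≤ g x`, and keeps it nondecreasing. A nondecreasing function is right lower
semicontinuous, since `w t₀ ≤ w s` for every `s ≥ t₀`.
-/

open scoped NNReal ENNReal

namespace ENNReal

noncomputable def capSucc (γ : ℝ≥0 → ℝ≥0∞) (t : ℝ≥0) : ℝ≥0 :=
  (min (γ t) (t + 1)).toNNReal

variable {γ : ℝ≥0 → ℝ≥0∞}

lemma min_add_one_ne_top (γ : ℝ≥0 → ℝ≥0∞) (t : ℝ≥0) : min (γ t) ((t : ℝ≥0∞) + 1) ≠ ∞ :=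
  ne_top_of_le_ne_top (by simp) (min_le_right _ _)

lemma coe_capSucc (γ : ℝ≥0 → ℝ≥0∞) (t : ℝ≥0) :
    (capSucc γ t : ℝ≥0∞) = min (γ t) ((t : ℝ≥0∞) + 1) :=
  coe_toNNReal (min_add_one_ne_top γ t)

lemma lt_capSucc {s : ℝ≥0} (hs : (s : ℝ≥0∞) < γ s) : s < capSucc γ s := by
  rw [← coe_lt_coe, coe_capSucc]
  exact lt_min hs (ENNReal.lt_add_right coe_ne_top one_ne_zero)

lemma capSucc_le {t : ℝ≥0} {a : ℝ≥0} (h : γ t ≤ a) : capSucc γ t ≤ a := by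
  rw [← coe_le_coe, coe_capSucc]
  exact (min_le_left _ _).trans h

lemma monotone_capSucc (hγ : Monotone γ) : Monotone (capSucc γ) := fun s t hst => by
  rw [← coe_le_coe, coe_capSucc, coe_capSucc]
  exact min_le_min (hγ hst) (by gcongr)

end ENNReal

lemma Monotone.exists_pos_forall_lt_add {w : ℝ≥0 → ℝ≥0} (hw : Monotone w) (t₀ : ℝ≥0)
    {ε : ℝ≥0} (hε : 0 < ε) :
    ∃ δ : ℝ≥0, 0 < δ ∧ ∀ s, t₀ ≤ s → s < t₀ + δ → w t₀ < w s + ε :=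
  ⟨1, one_pos, fun _ hs _ => lt_add_of_le_of_pos (hw hs) hε⟩

theorem gamma_implies_wong_general {K : Type*} (f g : K → ℝ≥0)
    (h : ∃ γ : ℝ≥0 → ℝ≥0∞, Monotone γ ∧ (∀ s : ℝ≥0, 0 < s → (s : ℝ≥0∞) < γ s) ∧
      ∀ x, γ (f x) ≤ (g x : ℝ≥0∞)) :
    ∃ w : ℝ≥0 → ℝ≥0, (∀ s : ℝ≥0, 0 < s → s < w s) ∧
      (∀ t₀ : ℝ≥0, 0 < t₀ → ∀ ε : ℝ≥0, 0 < ε →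
        ∃ δ : ℝ≥0, 0 < δ ∧ ∀ s, t₀ ≤ s → s < t₀ + δ → w t₀ < w s + ε) ∧
      ∀ x, w (f x) ≤ g x := by
  obtain ⟨γ, hmono, hgt, hle⟩ := h
  exact ⟨ENNReal.capSucc γ, fun s hs => ENNReal.lt_capSucc (hgt s hs),
    fun t₀ _ _ hε => (ENNReal.monotone_capSucc hmono).exists_pos_forall_lt_add t₀ hε,
    fun x => ENNReal.capSucc_le (hle x)⟩

theorem gamma_implies_wong {K : Type*} [Nonempty K] (f g : K → ℝ≥0)
    (h : ∃ γ : ℝ≥0 → ℝ≥0∞, Monotone γ ∧ (∀ s : ℝ≥0, 0 < s → (s : ℝ≥0∞) < γ s) ∧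
      ∀ x, γ (f x) ≤ (g x : ℝ≥0∞)) :
    ∃ w : ℝ≥0 → ℝ≥0, (∀ s : ℝ≥0, 0 < s → s < w s) ∧
      (∀ t₀ : ℝ≥0, 0 < t₀ → ∀ ε : ℝ≥0, 0 < ε →
        ∃ δ : ℝ≥0, 0 < δ ∧ ∀ s, t₀ ≤ s → s < t₀ + δ → w t₀ < w s + ε) ∧
      ∀ x, w (f x) ≤ g x :=
  gamma_implies_wong_general f g h
end

section
/- Let K be a nonempty set and f, g : K → [0,∞). If there exists a function w : [0,∞) → [0,∞) with w(s) > s for all s > 0, w right lower semicontinuous on (0,∞), and w(f(x)) ≤ g(x) for all x ∈ K, then for every ε > 0 there exists δ > 0 such that x ∈ K and g(x) < ε + δ imply f(x) < ε. -/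
open scoped NNReal

/- Since `w t > t`, right lower semicontinuity keeps `w` above some `c ∈ (t, w t)` on a right
neighbourhood `[t, t + δ₁)` of `t`, while beyond it `w s > s ≥ t + δ₁`. So `w ≥ t + δ` on `[t, ∞)`
for a uniform `δ > 0`, and then `w (f x) ≤ g x < ε + δ` rules out `f x ≥ ε`. -/

theorem NNReal.exists_pos_add_le_of_rightLowerSemicontinuous {w : ℝ≥0 → ℝ≥0} {t : ℝ≥0}
    (hw : ∀ s, 0 < s → s < w s) (ht : 0 < t)
    (hlsc : ∀ ε : ℝ≥0, 0 < ε → ∃ δ : ℝ≥0, 0 < δ ∧ ∀ s, t ≤ s → s < t + δ → w t < w s + ε) :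
    ∃ δ : ℝ≥0, 0 < δ ∧ ∀ s, t ≤ s → t + δ ≤ w s := by
  obtain ⟨c, htc, hcw⟩ := exists_between (hw t ht)
  obtain ⟨δ₁, hδ₁, hnear⟩ := hlsc (w t - c) (tsub_pos_of_lt hcw)
  refine ⟨min δ₁ (c - t), lt_min hδ₁ (tsub_pos_of_lt htc), fun s hts => ?_⟩
  rcases lt_or_ge s (t + δ₁) with hs | hs
  · have hcs : c ≤ w s := by
      by_contra! hsc
      have hle : w s + (w t - c) ≤ w t :=
        calc w s + (w t - c) ≤ c + (w t - c) := by gcongr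
          _ = w t := add_tsub_cancel_of_le hcw.le
      exact (hle.trans_lt (hnear s hts hs)).false
    calc t + min δ₁ (c - t) ≤ t + (c - t) := by gcongr; exact min_le_right _ _
      _ = c := add_tsub_cancel_of_le htc.le
      _ ≤ w s := hcs
  · calc t + min δ₁ (c - t) ≤ t + δ₁ := by gcongr; exact min_le_left _ _
      _ ≤ s := hs
      _ ≤ w s := (hw s (ht.trans_le hts)).le

theorem wong_implies_strong_general {K : Type*} (f g : K → ℝ≥0)
    (h : ∃ w : ℝ≥0 → ℝ≥0, (∀ s : ℝ≥0, 0 < s → s < w s) ∧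
      (∀ t₀ : ℝ≥0, 0 < t₀ → ∀ ε : ℝ≥0, 0 < ε →
        ∃ δ : ℝ≥0, 0 < δ ∧ ∀ s, t₀ ≤ s → s < t₀ + δ → w t₀ < w s + ε) ∧
      ∀ x, w (f x) ≤ g x) :
    ∀ ε : ℝ≥0, 0 < ε → ∃ δ : ℝ≥0, 0 < δ ∧ ∀ x, g x < ε + δ → f x < ε := by
  obtain ⟨w, hw, hlsc, hwfg⟩ := h
  intro ε hε
  obtain ⟨δ, hδ, hbound⟩ :=
    NNReal.exists_pos_add_le_of_rightLowerSemicontinuous hw hε (hlsc ε hε)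
  refine ⟨δ, hδ, fun x hx => ?_⟩
  by_contra! hfx
  exact ((hbound (f x) hfx).trans (hwfg x)).not_gt hx

theorem wong_implies_strong {K : Type*} [Nonempty K] (f g : K → ℝ≥0)
    (h : ∃ w : ℝ≥0 → ℝ≥0, (∀ s : ℝ≥0, 0 < s → s < w s) ∧
      (∀ t₀ : ℝ≥0, 0 < t₀ → ∀ ε : ℝ≥0, 0 < ε →
        ∃ δ : ℝ≥0, 0 < δ ∧ ∀ s, t₀ ≤ s → s < t₀ + δ → w t₀ < w s + ε) ∧
      ∀ x, w (f x) ≤ g x) :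
    ∀ ε : ℝ≥0, 0 < ε → ∃ δ : ℝ≥0, 0 < δ ∧ ∀ x, g x < ε + δ → f x < ε :=
  wong_implies_strong_general f g h
end

section
/- Let K be a nonempty set and f, g : K → [0,∞). If there exist a nondecreasing function φ : [0,∞) → [0,∞] and a function ψ : [0,∞) → [0,∞) such that ψ is right upper semicontinuous on (0,∞), φ(t) > ψ(t) for all t > 0, and φ(f(x)) ≤ ψ(g(x)) for all x ∈ K, then for every ε > 0 there exists δ > 0 such that x ∈ K and ε ≤ g(x) < ε + δ imply f(x) < ε. -/
open scoped NNReal ENNReal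

lemma exists_pos_forall_Ico_lt_of_rightUSC {ψ : ℝ≥0 → ℝ≥0} {t₀ : ℝ≥0}
    (hψ : ∀ ε : ℝ≥0, 0 < ε → ∃ δ : ℝ≥0, 0 < δ ∧ ∀ s, t₀ ≤ s → s < t₀ + δ → ψ s < ψ t₀ + ε)
    {c : ℝ≥0∞} (hc : (ψ t₀ : ℝ≥0∞) < c) :
    ∃ δ : ℝ≥0, 0 < δ ∧ ∀ s, t₀ ≤ s → s < t₀ + δ → (ψ s : ℝ≥0∞) < c := by
  obtain ⟨r, hψr, hrc⟩ := ENNReal.lt_iff_exists_nnreal_btwn.mp hc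
  have hψr' : ψ t₀ < r := ENNReal.coe_lt_coe.mp hψr
  obtain ⟨δ, hδ, hδψ⟩ := hψ (r - ψ t₀) (tsub_pos_of_lt hψr')
  refine ⟨δ, hδ, fun s hs₁ hs₂ => lt_trans ?_ hrc⟩
  have : ψ s < r := by simpa [add_tsub_cancel_of_le hψr'.le] using hδψ s hs₁ hs₂
  exact_mod_cast this

theorem phi_psi_implies_MK_general {K : Type*} (f g : K → ℝ≥0)
    (h : ∃ (φ : ℝ≥0 → ℝ≥0∞) (ψ : ℝ≥0 → ℝ≥0), Monotone φ ∧
      (∀ t₀ : ℝ≥0, 0 < t₀ → ∀ ε : ℝ≥0, 0 < ε →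
        ∃ δ : ℝ≥0, 0 < δ ∧ ∀ s, t₀ ≤ s → s < t₀ + δ → ψ s < ψ t₀ + ε) ∧
      (∀ t : ℝ≥0, 0 < t → (ψ t : ℝ≥0∞) < φ t) ∧
      ∀ x, φ (f x) ≤ (ψ (g x) : ℝ≥0∞)) :
    ∀ ε : ℝ≥0, 0 < ε → ∃ δ : ℝ≥0, 0 < δ ∧
      ∀ x, ε ≤ g x → g x < ε + δ → f x < ε := by
  obtain ⟨φ, ψ, hφ, hψ, hψφ, hfg⟩ := h
  intro ε hε
  obtain ⟨δ, hδ, hψ_lt⟩ := exists_pos_forall_Ico_lt_of_rightUSC (hψ ε hε) (hψφ ε hε)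
  exact ⟨δ, hδ, fun x hx₁ hx₂ => hφ.reflect_lt ((hfg x).trans_lt (hψ_lt _ hx₁ hx₂))⟩

theorem phi_psi_implies_MK {K : Type*} [Nonempty K] (f g : K → ℝ≥0)
    (h : ∃ (φ : ℝ≥0 → ℝ≥0∞) (ψ : ℝ≥0 → ℝ≥0), Monotone φ ∧
      (∀ t₀ : ℝ≥0, 0 < t₀ → ∀ ε : ℝ≥0, 0 < ε →
        ∃ δ : ℝ≥0, 0 < δ ∧ ∀ s, t₀ ≤ s → s < t₀ + δ → ψ s < ψ t₀ + ε) ∧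
      (∀ t : ℝ≥0, 0 < t → (ψ t : ℝ≥0∞) < φ t) ∧
      ∀ x, φ (f x) ≤ (ψ (g x) : ℝ≥0∞)) :
    ∀ ε : ℝ≥0, 0 < ε → ∃ δ : ℝ≥0, 0 < δ ∧
      ∀ x, ε ≤ g x → g x < ε + δ → f x < ε :=
  phi_psi_implies_MK_general f g h
end

section
/- Let K be a nonempty set and f, g : K → [0,∞). The following are equivalent: (a) for every ε > 0 there exists δ > 0 such that x ∈ K and ε ≤ g(x) < ε + δ imply f(x) < ε; (b) there exists a function l : (0,∞) → [0,∞) of type (L) such that f(x) < l(g(x)) for all x ∈ K with g(x) ≠ 0. Moreover, in (b) one can choose l right continuous, nondecreasing, and with l(s) > 0 for all s > 0. -/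
/-!
If `ε ≤ g x < ε + δ(ε)` forces `f x < ε`, then the monotone gauge
`D c = inf {g x | c ≤ f x, g x ≠ 0}` (capped at `c + 1`, as `sInf ∅ = 0` in `ℝ≥0`)
satisfies `c < D c` and `D (f x) ≤ g x`.
A strict generalized inverse of `D`, `t ↦ sup {(c + D c) / 2 | D c ≤ t}`, then lies above `f`
along `g` and is of type (L): just to the right of `s`, only those `c` with `c + D c ≤ 2 s`
satisfy `D c ≤ t`. Its right limit keeps all of this and is right continuous.
-/

open scoped NNReal Topology
open Set Function

def IsTypeL (l : ℝ≥0 → ℝ≥0) : Prop :=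
  ∀ s : ℝ≥0, 0 < s → ∃ δ : ℝ≥0, 0 < δ ∧ ∀ t, s ≤ t → t ≤ s + δ → l t ≤ s

def MKCondition {K : Type*} (f g : K → ℝ≥0) : Prop :=
  ∀ ε : ℝ≥0, 0 < ε → ∃ δ : ℝ≥0, 0 < δ ∧ ∀ x, ε ≤ g x → g x < ε + δ → f x < ε

section MKCondition

variable {K : Type*} {f g : K → ℝ≥0}

theorem mkCondition_of_isTypeL {l : ℝ≥0 → ℝ≥0} (hl : IsTypeL l)
    (hfg : ∀ x, g x ≠ 0 → f x < l (g x)) : MKCondition f g := by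
  intro ε hε
  obtain ⟨δ, hδ, hlδ⟩ := hl ε hε
  exact ⟨δ, hδ, fun x hεx hxδ => (hfg x (hε.trans_le hεx).ne').trans_le (hlδ _ hεx hxδ.le)⟩

theorem MKCondition.lt_of_ne_zero (h : MKCondition f g) {x : K} (hx : g x ≠ 0) : f x < g x := by
  obtain ⟨δ, hδ, hfδ⟩ := h (g x) (pos_iff_ne_zero.mpr hx)
  exact hfδ x le_rfl (lt_add_of_pos_right _ hδ)

variable (f g) in
noncomputable def mkGauge (c : ℝ≥0) : ℝ≥0 :=
  sInf (insert (c + 1) (g '' {x | c ≤ f x ∧ g x ≠ 0}))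

theorem monotone_mkGauge : Monotone (mkGauge f g) := by
  intro c c' hcc'
  refine le_csInf (insert_nonempty _ _) ?_
  rintro b (rfl | ⟨x, ⟨hcx, hx⟩, rfl⟩)
  · exact (csInf_le' (mem_insert _ _)).trans (by gcongr)
  · exact csInf_le' (mem_insert_of_mem _ ⟨x, ⟨hcc'.trans hcx, hx⟩, rfl⟩)

theorem mkGauge_le {x : K} (hx : g x ≠ 0) : mkGauge f g (f x) ≤ g x :=
  csInf_le' (mem_insert_of_mem _ ⟨x, ⟨le_rfl, hx⟩, rfl⟩)

theorem MKCondition.lt_mkGauge (h : MKCondition f g) (c : ℝ≥0) (hc : 0 < c) :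
    c < mkGauge f g c := by
  obtain ⟨δ, hδ, hfδ⟩ := h c hc
  refine (lt_add_of_pos_right c (lt_min one_pos hδ)).trans_le (le_csInf (insert_nonempty _ _) ?_)
  rintro b (rfl | ⟨x, ⟨hcx, hx⟩, rfl⟩)
  · gcongr
    exact min_le_left _ _
  · refine (add_le_add_right (min_le_right _ _) c).trans (not_lt.mp fun hxδ => ?_)
    exact (hfδ x (hcx.trans (h.lt_of_ne_zero hx).le) hxδ).not_ge hcx

end MKCondition

section MidpointInverse

variable {D : ℝ≥0 → ℝ≥0}

theorem exists_pos_le_add_lt {s u r : ℝ≥0} (hsu : s < u) (hr : 0 < r) :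
    ∃ Δ : ℝ≥0, 0 < Δ ∧ Δ ≤ r ∧ s + Δ < u := by
  obtain ⟨v, hsv, hvu⟩ := exists_between hsu
  refine ⟨min r (v - s), lt_min hr (tsub_pos_of_lt hsv), min_le_left _ _, ?_⟩
  calc s + min r (v - s) ≤ s + (v - s) := by gcongr; exact min_le_right _ _
    _ = v := add_tsub_cancel_of_le hsv.le
    _ < u := hvu

theorem Monotone.exists_forall_add_le_two_mul (hD : Monotone D) {s : ℝ≥0} (hs : 0 < s)
    (hsD : s < D s) : ∃ Δ : ℝ≥0, 0 < Δ ∧ Δ ≤ s ∧ ∀ c, D c ≤ s + Δ → c + D c ≤ 2 * s := by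
  by_cases hjump : ∃ c₀ < s, s < D c₀
  · obtain ⟨c₀, hc₀s, hsc₀⟩ := hjump
    obtain ⟨Δ, hΔ, hΔs, hΔD⟩ := exists_pos_le_add_lt hsc₀ (tsub_pos_of_lt hc₀s)
    refine ⟨Δ, hΔ, hΔs.trans tsub_le_self, fun c hc => ?_⟩
    have hcc₀ : c ≤ c₀ := (hD.reflect_lt (hc.trans_lt hΔD)).le
    calc c + D c ≤ c₀ + (s + (s - c₀)) := by gcongr; exact hc.trans (by gcongr)
      _ = 2 * s := by
        rw [← add_assoc, add_comm c₀, add_assoc, add_tsub_cancel_of_le hc₀s.le, two_mul]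
  · push Not at hjump
    obtain ⟨Δ, hΔ, hΔs, hΔD⟩ := exists_pos_le_add_lt hsD hs
    refine ⟨Δ, hΔ, hΔs, fun c hc => ?_⟩
    have hcs : c < s := hD.reflect_lt (hc.trans_lt hΔD)
    rw [two_mul]
    exact add_le_add hcs.le (hjump c hcs)

variable (D) in
/-- Averaging `c` with `D c` is what makes `c < midpointInverse D (D c)` strict. -/
noncomputable def midpointInverse (t : ℝ≥0) : ℝ≥0 :=
  max (t / 2) (sSup ((fun c => (c + D c) / 2) '' {c | 0 < c ∧ D c ≤ t}))

theorem midpointInverse_pos {t : ℝ≥0} (ht : 0 < t) : 0 < midpointInverse D t :=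
  (half_pos ht).trans_le (le_max_left _ _)

variable (hlt : ∀ c, 0 < c → c < D c)
include hlt

theorem midpoint_le_of_le {c t : ℝ≥0} (hc : 0 < c) (hct : D c ≤ t) : (c + D c) / 2 ≤ t := by
  rw [div_le_iff₀ two_pos, mul_two]
  exact add_le_add ((hlt c hc).le.trans hct) hct

theorem bddAbove_midpoints (t : ℝ≥0) :
    BddAbove ((fun c => (c + D c) / 2) '' {c | 0 < c ∧ D c ≤ t}) :=
  ⟨t, by rintro _ ⟨c, ⟨hc, hct⟩, rfl⟩; exact midpoint_le_of_le hlt hc hct⟩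

theorem monotone_midpointInverse : Monotone (midpointInverse D) := by
  intro t t' htt'
  refine max_le_max (by gcongr) (csSup_le_csSup' (bddAbove_midpoints hlt t') (image_mono ?_))
  exact fun c ⟨hc, hct⟩ => ⟨hc, hct.trans htt'⟩

theorem lt_midpointInverse {c t : ℝ≥0} (ht : 0 < t) (hct : D c ≤ t) :
    c < midpointInverse D t := by
  rcases eq_zero_or_pos c with rfl | hc
  · exact midpointInverse_pos ht
  · refine lt_of_lt_of_le ?_ ((le_csSup (bddAbove_midpoints hlt t) ⟨c, ⟨hc, hct⟩, rfl⟩).trans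
      (le_max_right _ _))
    rw [lt_div_iff₀ two_pos, mul_two]
    exact add_lt_add_right (hlt c hc) c

theorem isTypeL_midpointInverse (hD : Monotone D) : IsTypeL (midpointInverse D) := by
  intro s hs
  obtain ⟨Δ, hΔ, hΔs, hwindow⟩ := hD.exists_forall_add_le_two_mul hs (hlt s hs)
  refine ⟨Δ, hΔ, fun t _ htΔ => max_le ?_ (csSup_le' ?_)⟩
  · rw [div_le_iff₀ two_pos, mul_two]
    exact htΔ.trans (by gcongr)
  · rintro _ ⟨c, ⟨-, hct⟩, rfl⟩
    rw [div_le_iff₀ two_pos, mul_comm]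
    exact hwindow c (hct.trans htΔ)

end MidpointInverse

theorem IsTypeL.rightLim {l : ℝ≥0 → ℝ≥0} (hmono : Monotone l) (hl : IsTypeL l) :
    IsTypeL (rightLim l) := by
  intro s hs
  obtain ⟨δ, hδ, hlδ⟩ := hl s hs
  refine ⟨δ / 2, half_pos hδ, fun t hst htδ => ?_⟩
  have ht : t < s + δ := htδ.trans_lt (by gcongr; exact half_lt_self hδ)
  exact (hmono.rightLim_le ht).trans (hlδ _ le_self_add le_rfl)

theorem MKCondition.exists_isTypeL {K : Type*} {f g : K → ℝ≥0} (h : MKCondition f g) :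
    ∃ l : ℝ≥0 → ℝ≥0, IsTypeL l ∧
      (∀ s : ℝ≥0, 0 < s → ContinuousWithinAt l (Ici s) s) ∧
      (∀ s t : ℝ≥0, 0 < s → s ≤ t → l s ≤ l t) ∧
      (∀ s : ℝ≥0, 0 < s → 0 < l s) ∧
      ∀ x, g x ≠ 0 → f x < l (g x) := by
  have hlt := h.lt_mkGauge
  set l₀ := midpointInverse (mkGauge f g)
  have hmono : Monotone l₀ := monotone_midpointInverse hlt
  have hle : ∀ t, l₀ t ≤ rightLim l₀ t := fun t => hmono.le_rightLim le_rfl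
  refine ⟨rightLim l₀, (isTypeL_midpointInverse hlt monotone_mkGauge).rightLim hmono,
    fun s _ => continuousWithinAt_rightLim_Ici (hmono.tendsto_rightLim s),
    fun s t _ hst => hmono.rightLim hst,
    fun s hs => (midpointInverse_pos hs).trans_le (hle s),
    fun x hx => ?_⟩
  exact (lt_midpointInverse hlt (pos_iff_ne_zero.mpr hx) (mkGauge_le hx)).trans_le (hle _)

theorem MK_iff_Lim_general {K : Type*} (f g : K → ℝ≥0) :
    ((∀ ε : ℝ≥0, 0 < ε → ∃ δ : ℝ≥0, 0 < δ ∧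
        ∀ x, ε ≤ g x → g x < ε + δ → f x < ε) ↔
      (∃ l : ℝ≥0 → ℝ≥0,
        (∀ s : ℝ≥0, 0 < s → ∃ δ : ℝ≥0, 0 < δ ∧ ∀ t, s ≤ t → t ≤ s + δ → l t ≤ s) ∧
        ∀ x, g x ≠ 0 → f x < l (g x))) ∧
    ((∀ ε : ℝ≥0, 0 < ε → ∃ δ : ℝ≥0, 0 < δ ∧
        ∀ x, ε ≤ g x → g x < ε + δ → f x < ε) →
      ∃ l : ℝ≥0 → ℝ≥0,
        (∀ s : ℝ≥0, 0 < s → ∃ δ : ℝ≥0, 0 < δ ∧ ∀ t, s ≤ t → t ≤ s + δ → l t ≤ s) ∧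
        (∀ s : ℝ≥0, 0 < s → ContinuousWithinAt l (Set.Ici s) s) ∧
        (∀ s t : ℝ≥0, 0 < s → s ≤ t → l s ≤ l t) ∧
        (∀ s : ℝ≥0, 0 < s → 0 < l s) ∧
        ∀ x, g x ≠ 0 → f x < l (g x)) := by
  refine ⟨⟨fun h => ?_, fun ⟨l, hl, hfg⟩ => mkCondition_of_isTypeL hl hfg⟩,
    MKCondition.exists_isTypeL⟩
  obtain ⟨l, hl, -, -, -, hfg⟩ := MKCondition.exists_isTypeL h
  exact ⟨l, hl, hfg⟩

theorem MK_iff_Lim {K : Type*} [Nonempty K] (f g : K → ℝ≥0) :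
    ((∀ ε : ℝ≥0, 0 < ε → ∃ δ : ℝ≥0, 0 < δ ∧
        ∀ x, ε ≤ g x → g x < ε + δ → f x < ε) ↔
      (∃ l : ℝ≥0 → ℝ≥0,
        (∀ s : ℝ≥0, 0 < s → ∃ δ : ℝ≥0, 0 < δ ∧ ∀ t, s ≤ t → t ≤ s + δ → l t ≤ s) ∧
        ∀ x, g x ≠ 0 → f x < l (g x))) ∧
    ((∀ ε : ℝ≥0, 0 < ε → ∃ δ : ℝ≥0, 0 < δ ∧
        ∀ x, ε ≤ g x → g x < ε + δ → f x < ε) →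
      ∃ l : ℝ≥0 → ℝ≥0,
        (∀ s : ℝ≥0, 0 < s → ∃ δ : ℝ≥0, 0 < δ ∧ ∀ t, s ≤ t → t ≤ s + δ → l t ≤ s) ∧
        (∀ s : ℝ≥0, 0 < s → ContinuousWithinAt l (Set.Ici s) s) ∧
        (∀ s t : ℝ≥0, 0 < s → s ≤ t → l s ≤ l t) ∧
        (∀ s : ℝ≥0, 0 < s → 0 < l s) ∧
        ∀ x, g x ≠ 0 → f x < l (g x)) :=
  MK_iff_Lim_general f g
end

section
/- Let K be a nonempty set and f, g : K → [0,∞) with g⁻¹(0) ⊆ f⁻¹(0). Then the Meir-Keeler condition (for every ε > 0 there is δ > 0 with: ε ≤ g(x) < ε+δ implies f(x) < ε) is equivalent to the strengthened condition (for every ε > 0 there is δ > 0 with: g(x) < ε+δ implies f(x) < ε). -/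
open scoped NNReal ENNReal

/-! Applying the Meir-Keeler condition at the level `ε := g x` gives `f x < g x` wherever
`g x > 0`, so the points with `g x < ε` satisfy `f x < ε` without any choice of `δ`. -/

section MeirKeeler

variable {K : Type*} {f g : K → ℝ≥0}

theorem lt_self_of_meirKeeler
    (hMK : ∀ ε : ℝ≥0, 0 < ε → ∃ δ : ℝ≥0, 0 < δ ∧ ∀ x, ε ≤ g x → g x < ε + δ → f x < ε)
    {x : K} (hx : 0 < g x) : f x < g x := by
  obtain ⟨δ, hδ, hlt⟩ := hMK (g x) hx
  exact hlt x le_rfl (lt_add_of_pos_right _ hδ)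

theorem lt_of_meirKeeler (h0 : ∀ x, g x = 0 → f x = 0)
    (hMK : ∀ ε : ℝ≥0, 0 < ε → ∃ δ : ℝ≥0, 0 < δ ∧ ∀ x, ε ≤ g x → g x < ε + δ → f x < ε)
    {ε : ℝ≥0} (hε : 0 < ε) {x : K} (hx : g x < ε) : f x < ε := by
  rcases eq_zero_or_pos (g x) with hzero | hpos
  · exact (h0 x hzero).symm ▸ hε
  · exact (lt_self_of_meirKeeler hMK hpos).trans hx

end MeirKeeler

theorem MK_iff_strong_general {K : Type*} (f g : K → ℝ≥0)
    (h0 : ∀ x, g x = 0 → f x = 0) :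
    (∀ ε : ℝ≥0, 0 < ε → ∃ δ : ℝ≥0, 0 < δ ∧
        ∀ x, ε ≤ g x → g x < ε + δ → f x < ε) ↔
      (∀ ε : ℝ≥0, 0 < ε → ∃ δ : ℝ≥0, 0 < δ ∧ ∀ x, g x < ε + δ → f x < ε) := by
  constructor
  · intro hMK ε hε
    obtain ⟨δ, hδ, hlt⟩ := hMK ε hε
    refine ⟨δ, hδ, fun x hx => ?_⟩
    rcases le_or_gt ε (g x) with hle | hgt
    · exact hlt x hle hx
    · exact lt_of_meirKeeler h0 hMK hε hgt
  · intro hstrong ε hε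
    obtain ⟨δ, hδ, hlt⟩ := hstrong ε hε
    exact ⟨δ, hδ, fun x _ hx => hlt x hx⟩

theorem MK_iff_strong {K : Type*} [Nonempty K] (f g : K → ℝ≥0)
    (h0 : ∀ x, g x = 0 → f x = 0) :
    (∀ ε : ℝ≥0, 0 < ε → ∃ δ : ℝ≥0, 0 < δ ∧
        ∀ x, ε ≤ g x → g x < ε + δ → f x < ε) ↔
      (∀ ε : ℝ≥0, 0 < ε → ∃ δ : ℝ≥0, 0 < δ ∧ ∀ x, g x < ε + δ → f x < ε) :=
  MK_iff_strong_general f g h0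
end

section
/- Let X be a metric space, T : X → X, and R ⊆ X × X nonempty. T is a Meir-Keeler type mapping on R if and only if there exists a nondecreasing function γ : [0,∞) → [0,∞] such that γ(s) > s for all s > 0 and γ(d(Tx,Ty)) ≤ d(x,y) for all (x,y) ∈ R. -/
/-!
Given a Meir-Keeler map, take for `γ t` the infimum of `d(x, y)` over the pairs of `R` whose
images are at least `t` apart; it is monotone and `γ (d(Tx, Ty)) ≤ d(x, y)` by construction. If
`γ s ≤ s` for some `s > 0`, some pair has `d(Tx, Ty) ≥ s` and `d(x, y) < s + δ`; since `T` is
contractive on `R` also `d(x, y) ≥ s`, so the Meir-Keeler condition gives `d(Tx, Ty) < s`.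
Conversely, from `s + δ < γ s` and monotonicity, `s ≤ d(Tx, Ty)` forces `s + δ < d(x, y)`.
-/

open scoped NNReal ENNReal

def IsMeirKeelerOn {X : Type*} [PseudoMetricSpace X] (T : X → X) (R : Set (X × X)) : Prop :=
  ∀ ε : ℝ, 0 < ε → ∃ δ : ℝ, 0 < δ ∧ ∀ p ∈ R,
    ε ≤ dist p.1 p.2 → dist p.1 p.2 < ε + δ → dist (T p.1) (T p.2) < ε

noncomputable def minimalGauge {X : Type*} [PseudoMetricSpace X] (T : X → X)
    (R : Set (X × X)) (t : ℝ≥0) : ℝ≥0∞ :=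
  ⨅ p ∈ {p ∈ R | t ≤ nndist (T p.1) (T p.2)}, (nndist p.1 p.2 : ℝ≥0∞)

section PseudoMetricSpace

variable {X : Type*} [PseudoMetricSpace X] {T : X → X} {R : Set (X × X)}

theorem monotone_minimalGauge : Monotone (minimalGauge T R) :=
  fun _ _ hst => biInf_mono fun _ hp => ⟨hp.1, hst.trans hp.2⟩

theorem minimalGauge_nndist_le {p : X × X} (hp : p ∈ R) :
    minimalGauge T R (nndist (T p.1) (T p.2)) ≤ nndist p.1 p.2 :=
  biInf_le _ ⟨hp, le_rfl⟩

theorem isMeirKeelerOn_of_gauge {γ : ℝ≥0 → ℝ≥0∞} (hγ : Monotone γ)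
    (hlt : ∀ s : ℝ≥0, 0 < s → (s : ℝ≥0∞) < γ s)
    (hle : ∀ p ∈ R, γ (nndist (T p.1) (T p.2)) ≤ nndist p.1 p.2) :
    IsMeirKeelerOn T R := by
  intro ε hε
  lift ε to ℝ≥0 using hε.le
  obtain ⟨δ, hδ, hεδ⟩ := ENNReal.lt_iff_exists_add_pos_lt.1 (hlt ε hε)
  refine ⟨δ, hδ, fun p hp _ hpδ => ?_⟩
  by_contra! hTp
  have hγε : γ ε ≤ nndist p.1 p.2 :=
    (hγ (by rwa [← NNReal.coe_le_coe, coe_nndist])).trans (hle p hp)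
  have hpδ' : nndist p.1 p.2 < ε + δ := by rwa [← NNReal.coe_lt_coe, coe_nndist]
  exact hεδ.not_ge (hγε.trans (by exact_mod_cast hpδ'.le))

end PseudoMetricSpace

section MetricSpace

variable {X : Type*} [MetricSpace X] {T : X → X} {R : Set (X × X)}

theorem IsMeirKeelerOn.dist_le (hT : IsMeirKeelerOn T R) {p : X × X} (hp : p ∈ R) :
    dist (T p.1) (T p.2) ≤ dist p.1 p.2 := by
  rcases (dist_nonneg (x := p.1) (y := p.2)).eq_or_lt with h0 | hpos
  · simp [dist_le_zero.1 h0.ge]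
  · obtain ⟨δ, hδ, hδT⟩ := hT _ hpos
    exact (hδT p hp le_rfl (lt_add_of_pos_right _ hδ)).le

theorem IsMeirKeelerOn.lt_minimalGauge (hT : IsMeirKeelerOn T R) {s : ℝ≥0} (hs : 0 < s) :
    (s : ℝ≥0∞) < minimalGauge T R s := by
  obtain ⟨δ, hδ, hδT⟩ := hT s hs
  lift δ to ℝ≥0 using hδ.le
  by_contra! hγs
  obtain ⟨p, ⟨hp, hsTp⟩, hpδ⟩ : ∃ p ∈ {p ∈ R | s ≤ nndist (T p.1) (T p.2)},
      (nndist p.1 p.2 : ℝ≥0∞) < s + δ :=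
    lt_biInf_iff.1 (hγs.trans_lt (ENNReal.lt_add_right ENNReal.coe_ne_top (by simpa using hδ.ne')))
  have hsTp' : (s : ℝ) ≤ dist (T p.1) (T p.2) := by rwa [← coe_nndist, NNReal.coe_le_coe]
  have hpδ' : dist p.1 p.2 < s + δ := by rw [← coe_nndist]; exact_mod_cast hpδ
  exact (hδT p hp (hsTp'.trans (hT.dist_le hp)) hpδ').not_ge hsTp'

end MetricSpace

theorem MK_iff_gamma_metric_general {X : Type*} [MetricSpace X] (T : X → X)
    (R : Set (X × X)) :
    (∀ ε : ℝ, 0 < ε → ∃ δ : ℝ, 0 < δ ∧ ∀ p : X × X, p ∈ R →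
        ε ≤ dist p.1 p.2 → dist p.1 p.2 < ε + δ → dist (T p.1) (T p.2) < ε) ↔
      (∃ γ : ℝ≥0 → ℝ≥0∞, Monotone γ ∧ (∀ s : ℝ≥0, 0 < s → (s : ℝ≥0∞) < γ s) ∧
        ∀ p : X × X, p ∈ R →
          γ (nndist (T p.1) (T p.2)) ≤ (nndist p.1 p.2 : ℝ≥0∞)) :=
  ⟨fun (hT : IsMeirKeelerOn T R) => ⟨minimalGauge T R, monotone_minimalGauge, fun _ => hT.lt_minimalGauge,
      fun _ => minimalGauge_nndist_le⟩,
    fun ⟨_, hγ, hlt, hle⟩ => isMeirKeelerOn_of_gauge hγ hlt hle⟩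

theorem MK_iff_gamma_metric {X : Type*} [MetricSpace X] (T : X → X)
    (R : Set (X × X)) (hR : R.Nonempty) :
    (∀ ε : ℝ, 0 < ε → ∃ δ : ℝ, 0 < δ ∧ ∀ p : X × X, p ∈ R →
        ε ≤ dist p.1 p.2 → dist p.1 p.2 < ε + δ → dist (T p.1) (T p.2) < ε) ↔
      (∃ γ : ℝ≥0 → ℝ≥0∞, Monotone γ ∧ (∀ s : ℝ≥0, 0 < s → (s : ℝ≥0∞) < γ s) ∧
        ∀ p : X × X, p ∈ R →
          γ (nndist (T p.1) (T p.2)) ≤ (nndist p.1 p.2 : ℝ≥0∞)) :=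
  MK_iff_gamma_metric_general T R
end

section
/- Let X be a metric space, T : X → X, and R ⊆ X × X nonempty. T is a Meir-Keeler type mapping on R if and only if there exist a nondecreasing function φ : [0,∞) → [0,∞] and a function ψ : [0,∞) → [0,∞), right upper semicontinuous on (0,∞), with φ(t) > ψ(t) for all t > 0 and φ(d(Tx,Ty)) ≤ ψ(d(x,y)) for all (x,y) ∈ R. -/
/-!
Call `ε > 0` a level for the distance `t` if `T` maps every pair of `R` whose distance lies in
some window `[ε, b)` with `b > t` to a pair at distance `< ε`. A pair at distance `t` is mapped
below every level for `t`, and being a level for `t` is an open condition in `t`. The Meir-Keeler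
condition says that `t` is a level for itself; the critical `t`, below which there is no level for
`t`, carry pairwise disjoint windows `(t, b)` and are therefore countable. Choosing a finite
measure `μ` with an atom at each critical point, `φ s = s + μ (Iic s)` and the infimum `ψ t` of the
left limits `ε + μ (Iio ε)` of `φ` over the levels `ε` for `t` do the job: `ψ` is upper
semicontinuous because levels are open, and `ψ t < φ t` either because there is a level below `t`
or because `φ` jumps at `t`. Conversely, `ψ ε < φ ε` and the upper semicontinuity of `ψ` at `ε`
give a window `[ε, ε + δ)` on which `φ (d(Tx, Ty)) < φ ε`, hence `d(Tx, Ty) < ε`.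
-/

open scoped NNReal ENNReal

open Set MeasureTheory

theorem MeasureTheory.exists_isFiniteMeasure_forall_pos_singleton {α : Type*}
    [MeasurableSpace α] {S : Set α} (hS : S.Countable) :
    ∃ μ : Measure α, IsFiniteMeasure μ ∧ ∀ t ∈ S, 0 < μ {t} := by
  have := hS.to_subtype
  obtain ⟨w, hw_pos, hw_sum⟩ := ENNReal.exists_pos_sum_of_countable one_ne_zero S
  set ν : S → Measure α := fun t => (w t : ℝ≥0∞) • Measure.dirac (t : α)
  refine ⟨Measure.sum ν, ⟨?_⟩, fun t ht => ?_⟩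
  · rw [Measure.sum_apply _ MeasurableSet.univ]
    simpa [ν] using hw_sum.trans ENNReal.one_lt_top
  · calc (0 : ℝ≥0∞) < w ⟨t, ht⟩ := ENNReal.coe_pos.2 (hw_pos _)
      _ = ν ⟨t, ht⟩ {t} := by simp [ν]
      _ ≤ Measure.sum ν {t} := Measure.le_sum ν _ {t}

namespace MeirKeeler

variable {X : Type*} [MetricSpace X] (T : X → X) (R : Set (X × X))

def ShrinksIco (ε b : ℝ≥0) : Prop :=
  ∀ p ∈ R, nndist p.1 p.2 ∈ Ico ε b → nndist (T p.1) (T p.2) < ε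

def Contractive : Prop :=
  ∀ ε : ℝ≥0, 0 < ε → ∃ b, ε < b ∧ ShrinksIco T R ε b

theorem contractive_iff :
    Contractive T R ↔ ∀ ε : ℝ, 0 < ε → ∃ δ : ℝ, 0 < δ ∧ ∀ p : X × X, p ∈ R →
        ε ≤ dist p.1 p.2 → dist p.1 p.2 < ε + δ → dist (T p.1) (T p.2) < ε := by
  constructor
  · intro h ε hε
    lift ε to ℝ≥0 using hε.le
    obtain ⟨b, hεb, hb⟩ := h ε (mod_cast hε)
    refine ⟨b - ε, sub_pos.2 (mod_cast hεb), fun p hp h₁ h₂ => ?_⟩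
    rw [← coe_nndist] at h₁ h₂ ⊢
    rw [add_sub_cancel] at h₂
    exact_mod_cast hb p hp ⟨mod_cast h₁, mod_cast h₂⟩
  · intro h ε hε
    obtain ⟨δ, hδ, hε'⟩ := h ε (mod_cast hε)
    lift δ to ℝ≥0 using hδ.le
    refine ⟨ε + δ, lt_add_of_pos_right ε (mod_cast hδ), fun p hp hd => ?_⟩
    rw [← NNReal.coe_lt_coe, coe_nndist]
    exact hε' p hp (by rw [← coe_nndist]; exact_mod_cast hd.1)
      (by rw [← coe_nndist]; exact_mod_cast hd.2)

def levels (t : ℝ≥0) : Set ℝ≥0 :=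
  {ε | 0 < ε ∧ ∃ b, t < b ∧ ShrinksIco T R ε b}

def criticalLevels : Set ℝ≥0 :=
  {t | 0 < t ∧ ∀ ε ∈ levels T R t, t ≤ ε}

variable {T R}

theorem mem_levels_of_lt {t ε : ℝ≥0} (h : t < ε) : ε ∈ levels T R t :=
  ⟨pos_of_gt h, ε, h, fun _ _ hp => absurd hp.2 (not_lt.2 hp.1)⟩

theorem self_mem_levels (hT : Contractive T R) {t : ℝ≥0} (ht : 0 < t) :
    t ∈ levels T R t :=
  let ⟨b, hb, h⟩ := hT t ht
  ⟨ht, b, hb, h⟩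

theorem exists_lt_forall_mem_levels {t ε : ℝ≥0} (h : ε ∈ levels T R t) :
    ∃ b, t < b ∧ ∀ s < b, ε ∈ levels T R s :=
  let ⟨hε, b, hb, hshr⟩ := h
  ⟨b, hb, fun _ hs => ⟨hε, b, hs, hshr⟩⟩

theorem nndist_lt_of_mem_levels (hT : Contractive T R) {p : X × X} (hp : p ∈ R)
    {ε : ℝ≥0} (hε : ε ∈ levels T R (nndist p.1 p.2)) : nndist (T p.1) (T p.2) < ε := by
  obtain ⟨hε₀, b, hb, hshr⟩ := hε
  rcases le_or_gt ε (nndist p.1 p.2) with h | h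
  · exact hshr p hp ⟨h, hb⟩
  rcases eq_zero_or_pos (nndist p.1 p.2) with h₀ | h₀
  · rwa [nndist_eq_zero.1 h₀, nndist_self]
  · obtain ⟨b', hb', hshr'⟩ := hT _ h₀
    exact (hshr' p hp ⟨le_rfl, hb'⟩).trans h

theorem criticalLevels_countable (hT : Contractive T R) : (criticalLevels T R).Countable := by
  choose! b hb hshr using fun t (ht : t ∈ criticalLevels T R) => hT t ht.1
  have hbt : ∀ t ∈ criticalLevels T R, ∀ t' ∈ criticalLevels T R, t < t' → b t ≤ t' := by
    intro t ht t' ht' hlt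
    by_contra! h
    exact (ht'.2 t ⟨ht.1, b t, h, hshr t ht⟩).not_gt hlt
  refine PairwiseDisjoint.countable_of_Ioo (fun t ht t' ht' hne => ?_) hb
  rcases hne.lt_or_gt with h | h
  · exact disjoint_left.2 fun x hx hx' => (hx.2.trans_le (hbt t ht t' ht' h)).not_gt hx'.1
  · exact disjoint_left.2 fun x hx hx' => (hx'.2.trans_le (hbt t' ht' t ht h)).not_gt hx.1

theorem contractive_of_phi_psi {φ : ℝ≥0 → ℝ≥0∞} {ψ : ℝ≥0 → ℝ≥0} (hφ : Monotone φ)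
    (hψ : ∀ t₀ : ℝ≥0, 0 < t₀ → ∀ ε : ℝ≥0, 0 < ε →
      ∃ δ : ℝ≥0, 0 < δ ∧ ∀ s, t₀ ≤ s → s < t₀ + δ → ψ s < ψ t₀ + ε)
    (hψφ : ∀ t : ℝ≥0, 0 < t → (ψ t : ℝ≥0∞) < φ t)
    (hR : ∀ p ∈ R, φ (nndist (T p.1) (T p.2)) ≤ ψ (nndist p.1 p.2)) :
    Contractive T R := by
  intro ε hε
  obtain ⟨κ, hκ, hψκ⟩ := ENNReal.lt_iff_exists_add_pos_lt.1 (hψφ ε hε)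
  obtain ⟨δ, hδ, hδψ⟩ := hψ ε hε κ hκ
  refine ⟨ε + δ, lt_add_of_pos_right ε hδ, fun p hp hd => ?_⟩
  by_contra! h
  have hψ_lt : (ψ (nndist p.1 p.2) : ℝ≥0∞) < ψ ε + κ := mod_cast hδψ _ hd.1 hd.2
  exact ((hφ h).trans (hR p hp) |>.trans_lt hψ_lt |>.trans hψκ).false

variable (T R) (μ : Measure ℝ≥0)

noncomputable def phi (s : ℝ≥0) : ℝ≥0∞ := s + μ (Iic s)

noncomputable def psi (t : ℝ≥0) : ℝ≥0 := (⨅ ε ∈ levels T R t, (ε + μ (Iio ε) : ℝ≥0∞)).toNNReal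

theorem monotone_phi : Monotone (phi μ) :=
  fun _ _ h => add_le_add (mod_cast h) (measure_mono (Iic_subset_Iic.2 h))

variable {T R} [IsFiniteMeasure μ]

theorem coe_psi (t : ℝ≥0) :
    (psi T R μ t : ℝ≥0∞) = ⨅ ε ∈ levels T R t, (ε + μ (Iio ε) : ℝ≥0∞) :=
  ENNReal.coe_toNNReal <| ne_top_of_le_ne_top (by simp)
    (iInf₂_le _ (mem_levels_of_lt (lt_add_one t)))

theorem psi_le {t ε : ℝ≥0} (h : ε ∈ levels T R t) :
    (psi T R μ t : ℝ≥0∞) ≤ ε + μ (Iio ε) :=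
  (coe_psi μ t).trans_le (iInf₂_le ε h)

theorem phi_le_psi (hT : Contractive T R) {p : X × X} (hp : p ∈ R) :
    phi μ (nndist (T p.1) (T p.2)) ≤ psi T R μ (nndist p.1 p.2) := by
  rw [coe_psi]
  refine le_iInf₂ fun ε hε => ?_
  have h := nndist_lt_of_mem_levels hT hp hε
  exact add_le_add (mod_cast h.le) (measure_mono (Iic_subset_Iio.2 h))

theorem psi_lt_phi (hT : Contractive T R) (hμ : ∀ t ∈ criticalLevels T R, 0 < μ {t})
    {t : ℝ≥0} (ht : 0 < t) : psi T R μ t < phi μ t := by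
  by_cases hS : t ∈ criticalLevels T R
  · calc (psi T R μ t : ℝ≥0∞) ≤ t + μ (Iio t) := psi_le μ (self_mem_levels hT ht)
      _ < t + (μ (Iio t) + μ {t}) :=
        ENNReal.add_lt_add_left ENNReal.coe_ne_top
          (ENNReal.lt_add_right (measure_ne_top μ _) (hμ t hS).ne')
      _ = phi μ t := by
        rw [phi, ← Iio_union_right, measure_union (by simp) (measurableSet_singleton t)]
  · obtain ⟨ε, hε, hεt⟩ : ∃ ε ∈ levels T R t, ε < t := by
      simpa [criticalLevels, ht] using hS
    calc (psi T R μ t : ℝ≥0∞) ≤ ε + μ (Iio ε) := psi_le μ hε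
      _ < t + μ (Iic t) := ENNReal.add_lt_add_of_lt_of_le (measure_ne_top μ _) (mod_cast hεt)
          (measure_mono ((Iio_subset_Iio hεt.le).trans Iio_subset_Iic_self))

variable (T R) in
theorem exists_pos_forall_psi_lt (t₀ : ℝ≥0) {ε : ℝ≥0} (hε : 0 < ε) :
    ∃ δ : ℝ≥0, 0 < δ ∧ ∀ s < t₀ + δ, psi T R μ s < psi T R μ t₀ + ε := by
  obtain ⟨e, he, hlt⟩ : ∃ e ∈ levels T R t₀, (e + μ (Iio e) : ℝ≥0∞) < psi T R μ t₀ + ε := by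
    refine lt_biInf_iff.mp ?_
    rw [← coe_psi]
    exact ENNReal.lt_add_right ENNReal.coe_ne_top (mod_cast hε.ne')
  obtain ⟨b, hb, hbe⟩ := exists_lt_forall_mem_levels he
  refine ⟨b - t₀, tsub_pos_of_lt hb, fun s hs => ?_⟩
  rw [add_tsub_cancel_of_le hb.le] at hs
  exact_mod_cast (psi_le μ (hbe s hs)).trans_lt hlt

end MeirKeeler

open MeirKeeler

theorem MK_iff_phi_psi_metric_general {X : Type*} [MetricSpace X] (T : X → X)
    (R : Set (X × X)) :
    (∀ ε : ℝ, 0 < ε → ∃ δ : ℝ, 0 < δ ∧ ∀ p : X × X, p ∈ R →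
        ε ≤ dist p.1 p.2 → dist p.1 p.2 < ε + δ → dist (T p.1) (T p.2) < ε) ↔
      (∃ (φ : ℝ≥0 → ℝ≥0∞) (ψ : ℝ≥0 → ℝ≥0), Monotone φ ∧
        (∀ t₀ : ℝ≥0, 0 < t₀ → ∀ ε : ℝ≥0, 0 < ε →
          ∃ δ : ℝ≥0, 0 < δ ∧ ∀ s, t₀ ≤ s → s < t₀ + δ → ψ s < ψ t₀ + ε) ∧
        (∀ t : ℝ≥0, 0 < t → (ψ t : ℝ≥0∞) < φ t) ∧
        ∀ p : X × X, p ∈ R →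
          φ (nndist (T p.1) (T p.2)) ≤ (ψ (nndist p.1 p.2) : ℝ≥0∞)) := by
  rw [← contractive_iff]
  refine ⟨fun hT => ?_, fun ⟨φ, ψ, hφ, hψ, hψφ, hR⟩ => contractive_of_phi_psi hφ hψ hψφ hR⟩
  obtain ⟨μ, _, hμ⟩ := exists_isFiniteMeasure_forall_pos_singleton (criticalLevels_countable hT)
  refine ⟨phi μ, psi T R μ, monotone_phi μ, fun t₀ _ ε hε => ?_,
    fun t ht => psi_lt_phi μ hT hμ ht, fun p hp => phi_le_psi μ hT hp⟩
  obtain ⟨δ, hδ, hψ⟩ := exists_pos_forall_psi_lt T R μ t₀ hε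
  exact ⟨δ, hδ, fun s _ hs => hψ s hs⟩

theorem MK_iff_phi_psi_metric {X : Type*} [MetricSpace X] (T : X → X)
    (R : Set (X × X)) (hR : R.Nonempty) :
    (∀ ε : ℝ, 0 < ε → ∃ δ : ℝ, 0 < δ ∧ ∀ p : X × X, p ∈ R →
        ε ≤ dist p.1 p.2 → dist p.1 p.2 < ε + δ → dist (T p.1) (T p.2) < ε) ↔
      (∃ (φ : ℝ≥0 → ℝ≥0∞) (ψ : ℝ≥0 → ℝ≥0), Monotone φ ∧
        (∀ t₀ : ℝ≥0, 0 < t₀ → ∀ ε : ℝ≥0, 0 < ε →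
          ∃ δ : ℝ≥0, 0 < δ ∧ ∀ s, t₀ ≤ s → s < t₀ + δ → ψ s < ψ t₀ + ε) ∧
        (∀ t : ℝ≥0, 0 < t → (ψ t : ℝ≥0∞) < φ t) ∧
        ∀ p : X × X, p ∈ R →
          φ (nndist (T p.1) (T p.2)) ≤ (ψ (nndist p.1 p.2) : ℝ≥0∞)) :=
  MK_iff_phi_psi_metric_general T R
end

section
/- Let X be a metric space, T : X → X, x ∈ X, and x_n = Tⁿx. Suppose for every ε > 0 there exists δ > 0 such that n ∈ ℕ and ε ≤ d(x_n, x_{n+1}) < ε + δ imply d(x_{n+1}, x_{n+2}) < ε. Then the sequence {d(x_n, x_{n+1})} is nonincreasing and converges to 0. -/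
/-!
Write `d n = dist xₙ xₙ₊₁`. If `d n` is positive, the hypothesis with `ε = d n` forces
`d (n + 1) < d n`; if `d n = 0` then `xₙ` is a fixed point and the sequence stays at `0`.
So `d` decreases to its infimum `L ≥ 0`, and `L > 0` is impossible: some `d n` lies in `[L, L + δ)`, whence `d (n + 1) < L`.
-/

open Filter Topology

section MeirKeeler

variable {a : ℕ → ℝ}
  (ha : ∀ ε : ℝ, 0 < ε → ∃ δ : ℝ, 0 < δ ∧ ∀ n : ℕ, ε ≤ a n → a n < ε + δ → a (n + 1) < ε)
include ha

theorem lt_self_of_meirKeeler_s15 {n : ℕ} (hn : 0 < a n) : a (n + 1) < a n := by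
  obtain ⟨δ, hδ, hstep⟩ := ha (a n) hn
  exact hstep n le_rfl (lt_add_of_pos_right _ hδ)

theorem tendsto_zero_of_meirKeeler (hanti : Antitone a) (hnonneg : ∀ n, 0 ≤ a n) :
    Tendsto a atTop (𝓝 0) := by
  have hbdd : BddBelow (Set.range a) := ⟨0, by rintro _ ⟨n, rfl⟩; exact hnonneg n⟩
  suffices hinf : ⨅ n, a n = 0 from hinf ▸ tendsto_atTop_ciInf hanti hbdd
  refine le_antisymm (not_lt.mp fun hpos => ?_) (le_ciInf hnonneg)
  obtain ⟨δ, hδ, hstep⟩ := ha _ hpos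
  obtain ⟨n, hn⟩ := exists_lt_of_ciInf_lt (lt_add_of_pos_right (⨅ n, a n) hδ)
  exact (ciInf_le hbdd (n + 1)).not_gt (hstep n (ciInf_le hbdd n) hn)

end MeirKeeler

theorem dist_iterate_succ_eq_zero {X : Type*} [MetricSpace X] {T : X → X} {x : X} {n : ℕ}
    (h : dist (T^[n] x) (T^[n + 1] x) = 0) : dist (T^[n + 1] x) (T^[n + 2] x) = 0 := by
  rw [dist_eq_zero] at h ⊢
  rw [Function.iterate_succ_apply' T n, Function.iterate_succ_apply' T (n + 1), h]

theorem dist_iterate_antitone_tendsto_zero {X : Type*} [MetricSpace X]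
    (T : X → X) (x : X)
    (h : ∀ ε : ℝ, 0 < ε → ∃ δ : ℝ, 0 < δ ∧ ∀ n : ℕ,
      ε ≤ dist (T^[n] x) (T^[n + 1] x) → dist (T^[n] x) (T^[n + 1] x) < ε + δ →
        dist (T^[n + 1] x) (T^[n + 2] x) < ε) :
    Antitone (fun n : ℕ => dist (T^[n] x) (T^[n + 1] x)) ∧
      Filter.Tendsto (fun n : ℕ => dist (T^[n] x) (T^[n + 1] x))
        Filter.atTop (nhds 0) := by
  have hanti : Antitone (fun n : ℕ => dist (T^[n] x) (T^[n + 1] x)) := by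
    refine antitone_nat_of_succ_le fun n => ?_
    rcases (dist_nonneg (x := T^[n] x) (y := T^[n + 1] x)).eq_or_lt with hzero | hpos
    · exact (dist_iterate_succ_eq_zero hzero.symm).trans_le dist_nonneg
    · exact (lt_self_of_meirKeeler_s15 h hpos).le
  exact ⟨hanti, tendsto_zero_of_meirKeeler h hanti fun _ => dist_nonneg⟩
end

section
/- Let X be a metric space, {x_n} a sequence in X, l < m positive integers, and 0 < η ≤ ε. Suppose d(x_l, x_m) ≥ 2ε and d(x_i, x_{i+1}) < η/3 for all i with l ≤ i ≤ m. Then there exists j with l < j < m and ε + 2η/3 ≤ d(x_l, x_j) < ε + η. -/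
/-!
The distances `d(x_l, x_j)` start at `0` and, by the triangle inequality, grow by less than `η/3`
per step, so they cannot jump over the window `[ε + 2η/3, ε + η)`; they reach it before `j = m`
because `d(x_l, x_m) ≥ 2ε ≥ ε + η`.
-/

theorem exists_mem_Ico_of_lt_add {α : Type*} [AddCommMonoid α] [LinearOrder α]
    [IsOrderedAddMonoid α] {f : ℕ → α} {a δ : α} {l m : ℕ} (hlm : l ≤ m) (hl : f l < a)
    (hm : a ≤ f m) (hstep : ∀ i, l ≤ i → i < m → f (i + 1) < f i + δ) :
    ∃ j, l < j ∧ j ≤ m ∧ a ≤ f j ∧ f j < a + δ := by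
  induction m, hlm using Nat.le_induction with
  | base => exact absurd hm hl.not_ge
  | succ m hlm ih =>
    by_cases hfm : a ≤ f m
    · obtain ⟨j, hlj, hjm, hj⟩ := ih hfm fun i hli him => hstep i hli (by omega)
      exact ⟨j, hlj, by omega, hj⟩
    · refine ⟨m + 1, by omega, le_rfl, hm, ?_⟩
      exact (hstep m hlm (by omega)).trans_le (by gcongr; exact (not_le.mp hfm).le)

theorem pre_cauchy_lemma_general {X : Type*} [MetricSpace X] (x : ℕ → X)
    (l m : ℕ) (hlm : l < m) (ε η : ℝ) (hη : 0 < η)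
    (hηε : η ≤ ε) (hbig : 2 * ε ≤ dist (x l) (x m))
    (hsmall : ∀ i : ℕ, l ≤ i → i ≤ m → dist (x i) (x (i + 1)) < η / 3) :
    ∃ j : ℕ, l < j ∧ j < m ∧ ε + 2 * η / 3 ≤ dist (x l) (x j) ∧
      dist (x l) (x j) < ε + η := by
  have hstep : ∀ i, l ≤ i → i < m → dist (x l) (x (i + 1)) < dist (x l) (x i) + η / 3 :=
    fun i hli him =>
      (dist_triangle _ (x i) _).trans_lt (add_lt_add_right (hsmall i hli him.le) _)
  obtain ⟨j, hlj, hjm, hlow, hup⟩ := exists_mem_Ico_of_lt_add (f := fun j => dist (x l) (x j))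
    (a := ε + 2 * η / 3) hlm.le (by simp only [dist_self]; linarith) (by linarith) hstep
  have hjne : j ≠ m := by
    rintro rfl
    linarith
  exact ⟨j, hlj, lt_of_le_of_ne hjm hjne, hlow, by linarith⟩

theorem pre_cauchy_lemma {X : Type*} [MetricSpace X] (x : ℕ → X)
    (l m : ℕ) (hl : 0 < l) (hlm : l < m) (ε η : ℝ) (hε : 0 < ε) (hη : 0 < η)
    (hηε : η ≤ ε) (hbig : 2 * ε ≤ dist (x l) (x m))
    (hsmall : ∀ i : ℕ, l ≤ i → i ≤ m → dist (x i) (x (i + 1)) < η / 3) :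
    ∃ j : ℕ, l < j ∧ j < m ∧ ε + 2 * η / 3 ≤ dist (x l) (x j) ∧
      dist (x l) (x j) < ε + η :=
  pre_cauchy_lemma_general x l m hlm ε η hη hηε hbig hsmall
end

section
/- Let X be a metric space, T : X → X, x ∈ X, and x_n = Tⁿx. Suppose for every ε > 0 there exists δ > 0 such that i, j ∈ ℕ and ε ≤ d(x_i, x_j) < ε + δ imply d(x_{i+1}, x_{j+1}) < ε. Then {x_n} is a Cauchy sequence. -/
/-!
Along the orbit the consecutive distances `dist (xₙ) (xₙ₊₁)` do not increase (apply the hypothesis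
with `ε = dist (xₙ) (xₙ₊₁)`), and their infimum `r` is `0`: otherwise the hypothesis at `ε = r`
pushes some distance below `r`. Given `ε`, take `δ ≤ ε` from the hypothesis and `N` with all later
consecutive distances below `δ`. Then `dist (xₙ) (x_N) < ε + δ` for every `n ≥ N` by induction:
while `dist (xₙ) (x_N) < ε`, one more step costs less than `δ`; once it lies in `[ε, ε + δ)`, the
hypothesis gives `dist (xₙ₊₁) (x_{N+1}) < ε`, and `x_{N+1}` is within `δ` of `x_N`.
-/

open Filter Topology

namespace MeirKeeler

variable {X : Type*} [PseudoMetricSpace X]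

/-- The Meir–Keeler-type hypothesis of the theorem, along an arbitrary sequence. -/
def Along (u : ℕ → X) : Prop :=
  ∀ ε : ℝ, 0 < ε → ∃ δ : ℝ, 0 < δ ∧ ∀ i j : ℕ,
    ε ≤ dist (u i) (u j) → dist (u i) (u j) < ε + δ → dist (u (i + 1)) (u (j + 1)) < ε

variable {u : ℕ → X}

theorem Along.dist_succ_lt (hu : Along u) {i j : ℕ} (hij : 0 < dist (u i) (u j)) :
    dist (u (i + 1)) (u (j + 1)) < dist (u i) (u j) := by
  obtain ⟨δ, hδ, hstep⟩ := hu _ hij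
  exact hstep i j le_rfl (lt_add_of_pos_right _ hδ)

theorem Along.tendsto_dist_succ (hu : Along u)
    (hanti : Antitone fun n => dist (u n) (u (n + 1))) :
    Tendsto (fun n => dist (u n) (u (n + 1))) atTop (𝓝 0) := by
  have hbdd : BddBelow (Set.range fun n => dist (u n) (u (n + 1))) :=
    ⟨0, by rintro _ ⟨n, rfl⟩; exact dist_nonneg⟩
  set r := ⨅ n, dist (u n) (u (n + 1))
  suffices hr : r = 0 from hr ▸ tendsto_atTop_ciInf hanti hbdd
  refine le_antisymm (not_lt.mp fun hr => ?_) (le_ciInf fun _ => dist_nonneg)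
  obtain ⟨δ, hδ, hstep⟩ := hu r hr
  obtain ⟨n, hn⟩ := exists_lt_of_ciInf_lt (lt_add_of_pos_right r hδ)
  exact (ciInf_le hbdd (n + 1)).not_gt (hstep n (n + 1) (ciInf_le hbdd n) hn)

theorem dist_lt_of_forall_dist_succ_lt {ε δ : ℝ} {N : ℕ}
    (hstep : ∀ i j : ℕ,
      ε ≤ dist (u i) (u j) → dist (u i) (u j) < ε + δ → dist (u (i + 1)) (u (j + 1)) < ε)
    (hsmall : ∀ m, N ≤ m → dist (u m) (u (m + 1)) < δ) (hε : 0 < ε) :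
    ∀ n, N ≤ n → dist (u n) (u N) < ε + δ := by
  intro n hn
  induction n, hn using Nat.le_induction with
  | base => simpa using add_pos_of_pos_of_nonneg hε (dist_nonneg.trans_lt (hsmall N le_rfl)).le
  | succ n hn ih =>
    rcases lt_or_ge (dist (u n) (u N)) ε with hlt | hge
    · calc dist (u (n + 1)) (u N) ≤ dist (u (n + 1)) (u n) + dist (u n) (u N) :=
            dist_triangle _ _ _
        _ < δ + ε := add_lt_add (dist_comm (u n) _ ▸ hsmall n hn) hlt
        _ = ε + δ := add_comm δ ε
    · calc dist (u (n + 1)) (u N) ≤ dist (u (n + 1)) (u (N + 1)) + dist (u (N + 1)) (u N) :=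
            dist_triangle _ _ _
        _ < ε + δ := add_lt_add (hstep n N hge ih) (dist_comm (u N) _ ▸ hsmall N le_rfl)

theorem Along.cauchySeq (hu : Along u)
    (hlim : Tendsto (fun n => dist (u n) (u (n + 1))) atTop (𝓝 0)) : CauchySeq u := by
  refine Metric.cauchySeq_iff'.mpr fun ε hε => ?_
  obtain ⟨δ₀, hδ₀, hstep⟩ := hu (ε / 2) (half_pos hε)
  set δ := min δ₀ (ε / 2)
  have hδ : 0 < δ := lt_min hδ₀ (half_pos hε)
  obtain ⟨N, hN⟩ := eventually_atTop.mp (hlim.eventually (gt_mem_nhds hδ))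
  refine ⟨N, fun n hn => ?_⟩
  have hstep' : ∀ i j : ℕ, ε / 2 ≤ dist (u i) (u j) → dist (u i) (u j) < ε / 2 + δ →
      dist (u (i + 1)) (u (j + 1)) < ε / 2 :=
    fun i j hge hlt => hstep i j hge (hlt.trans_le (by gcongr; exact min_le_left _ _))
  calc dist (u n) (u N) < ε / 2 + δ :=
        dist_lt_of_forall_dist_succ_lt hstep' hN (half_pos hε) n hn
    _ ≤ ε / 2 + ε / 2 := by gcongr; exact min_le_right _ _
    _ = ε := add_halves ε

end MeirKeeler

open MeirKeeler

theorem antitone_dist_iterate_succ {X : Type*} [MetricSpace X] {T : X → X} {x : X}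
    (hT : Along fun n => T^[n] x) : Antitone fun n => dist (T^[n] x) (T^[n + 1] x) := by
  refine antitone_nat_of_succ_le fun n => ?_
  rcases (dist_nonneg (x := T^[n] x) (y := T^[n + 1] x)).eq_or_lt with h0 | hpos
  · have hfix : T^[n + 1 + 1] x = T^[n + 1] x := by
      simpa only [Function.iterate_succ_apply'] using congrArg T (dist_eq_zero.mp h0.symm).symm
    rw [hfix, dist_self]
    exact dist_nonneg
  · exact (hT.dist_succ_lt hpos).le

theorem iterate_cauchySeq {X : Type*} [MetricSpace X] (T : X → X) (x : X)
    (h : ∀ ε : ℝ, 0 < ε → ∃ δ : ℝ, 0 < δ ∧ ∀ i j : ℕ,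
      ε ≤ dist (T^[i] x) (T^[j] x) → dist (T^[i] x) (T^[j] x) < ε + δ →
        dist (T^[i + 1] x) (T^[j + 1] x) < ε) :
    CauchySeq (fun n : ℕ => T^[n] x) :=
  have hT : Along fun n => T^[n] x := h
  hT.cauchySeq (hT.tendsto_dist_succ (antitone_dist_iterate_succ hT))
end

section
/- Let X be a complete metric space, T : X → X, and R ⊆ X × X nonempty. Suppose: (1) R is transitive; (2) there exists x ∈ X with (x, Tx) ∈ R; (3) (Tu, Tv) ∈ R for all (u,v) ∈ R; (4) for every ε > 0 there exists δ > 0 such that (u,v) ∈ R and ε ≤ d(u,v) < ε+δ imply d(Tu,Tv) < ε; (5) whenever a sequence {x_n} in X satisfies x_n → y and (x_n, x_{n+1}) ∈ R for all n, some subsequence {x_{n_k}} satisfies Tx_{n_k} → Ty. Then {Tⁿx} converges to a fixed point of T. -/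
/-!
The orbit `xₙ = Tⁿ x` is an `R`-chain, so the Meir–Keeler condition applies to every pair `(xₙ, xₘ)`
with `n < m`. It forces `T` to shrink distances along `R`, hence `d(xₙ, xₙ₊₁)` decreases to some
`r`, and `r > 0` would contradict the condition at `ε = r`. Once `d(x_N, x_{N+1}) < δ`, the
condition at `ε / 2` keeps the whole tail of the orbit within `ε / 2 + δ` of `x_N`, so the orbit is
Cauchy. Its limit `z` is fixed because `T x_{n_k} = x_{n_k + 1} → z` while `T x_{n_k} → T z`.
-/

open Filter Topology

theorem iterate_succ_mem_of_mem_map {X : Type*} {T : X → X} {R : Set (X × X)} {x : X}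
    (hx : (x, T x) ∈ R) (hT : ∀ u v : X, (u, v) ∈ R → (T u, T v) ∈ R) (n : ℕ) :
    (T^[n] x, T^[n + 1] x) ∈ R := by
  induction n with
  | zero => simpa using hx
  | succ n ih => simpa only [Function.iterate_succ_apply'] using hT _ _ ih

section MeirKeeler

variable {X : Type*} [MetricSpace X] {T : X → X} {R : Set (X × X)}

def MeirKeelerOn (T : X → X) (R : Set (X × X)) : Prop :=
  ∀ ε : ℝ, 0 < ε → ∃ δ : ℝ, 0 < δ ∧ ∀ u v : X, (u, v) ∈ R →
    ε ≤ dist u v → dist u v < ε + δ → dist (T u) (T v) < ε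

namespace MeirKeelerOn

theorem dist_map_lt (hMK : MeirKeelerOn T R) {u v : X} (huv : (u, v) ∈ R)
    (hpos : 0 < dist u v) : dist (T u) (T v) < dist u v := by
  obtain ⟨δ, hδ, h⟩ := hMK _ hpos
  exact h u v huv le_rfl (lt_add_of_pos_right _ hδ)

theorem dist_map_le (hMK : MeirKeelerOn T R) {u v : X} (huv : (u, v) ∈ R) :
    dist (T u) (T v) ≤ dist u v := by
  rcases (dist_nonneg (x := u) (y := v)).eq_or_lt with h | h
  · rw [(dist_eq_zero.mp h.symm : u = v), dist_self, dist_self]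
  · exact (hMK.dist_map_lt huv h).le

theorem exists_dist_map_lt (hMK : MeirKeelerOn T R) {ε : ℝ} (hε : 0 < ε) :
    ∃ δ : ℝ, 0 < δ ∧ ∀ u v : X, (u, v) ∈ R → dist u v < ε + δ → dist (T u) (T v) < ε := by
  obtain ⟨δ, hδ, h⟩ := hMK ε hε
  refine ⟨δ, hδ, fun u v huv hlt => ?_⟩
  rcases lt_or_ge (dist u v) ε with hsmall | hlarge
  · exact (hMK.dist_map_le huv).trans_lt hsmall
  · exact h u v huv hlarge hlt

theorem tendsto_dist_iterate_succ (hMK : MeirKeelerOn T R) {x : X}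
    (hchain : ∀ n, (T^[n] x, T^[n + 1] x) ∈ R) :
    Tendsto (fun n => dist (T^[n] x) (T^[n + 1] x)) atTop (𝓝 0) := by
  set a : ℕ → ℝ := fun n => dist (T^[n] x) (T^[n + 1] x)
  have ha_succ : ∀ n, a (n + 1) = dist (T (T^[n] x)) (T (T^[n + 1] x)) := fun n => by
    simp only [a, Function.iterate_succ_apply']
  have hbdd : BddBelow (Set.range a) := ⟨0, by rintro _ ⟨n, rfl⟩; exact dist_nonneg⟩
  have hlim : Tendsto a atTop (𝓝 (⨅ n, a n)) :=
    tendsto_atTop_ciInf (antitone_nat_of_succ_le fun n => ha_succ n ▸ hMK.dist_map_le (hchain n))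
      hbdd
  suffices hr : ⨅ n, a n = 0 from hr ▸ hlim
  by_contra hne
  have hr : 0 < ⨅ n, a n := (le_ciInf fun n => dist_nonneg).lt_of_ne' hne
  obtain ⟨δ, hδ, h⟩ := hMK _ hr
  obtain ⟨n, hn⟩ := (hlim.eventually_lt_const (lt_add_of_pos_right _ hδ)).exists
  have hshrink := h _ _ (hchain n) (ciInf_le hbdd n) hn
  exact (ciInf_le hbdd (n + 1)).not_gt (ha_succ n ▸ hshrink)

theorem cauchySeq_iterate (hMK : MeirKeelerOn T R)
    (htrans : ∀ u v w : X, (u, v) ∈ R → (v, w) ∈ R → (u, w) ∈ R) {x : X}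
    (hchain : ∀ n, (T^[n] x, T^[n + 1] x) ∈ R) : CauchySeq fun n => T^[n] x := by
  have : IsTrans X fun u v => (u, v) ∈ R := ⟨htrans⟩
  rw [Metric.cauchySeq_iff']
  intro ε hε
  obtain ⟨δ, hδ, hstep⟩ := hMK.exists_dist_map_lt (half_pos hε)
  set η := min δ (ε / 2)
  obtain ⟨N, hN⟩ :=
    ((hMK.tendsto_dist_iterate_succ hchain).eventually_lt_const (lt_min hδ (half_pos hε))).exists
  have htail : ∀ m, N + 1 ≤ m → dist (T^[N] x) (T^[m] x) < ε / 2 + η := by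
    intro m hm
    induction m, hm using Nat.le_induction with
    | base => linarith [dist_nonneg (x := T^[N] x) (y := T^[N + 1] x)]
    | succ m hm ih =>
      have hmem : (T^[N] x, T^[m] x) ∈ R :=
        Nat.rel_of_forall_rel_succ_of_lt (fun u v => (u, v) ∈ R) hchain hm
      have hshrink := hstep _ _ hmem (ih.trans_le (by gcongr; exact min_le_left _ _))
      rw [← Function.iterate_succ_apply' T N, ← Function.iterate_succ_apply' T m] at hshrink
      calc dist (T^[N] x) (T^[m + 1] x)
          ≤ dist (T^[N] x) (T^[N + 1] x) + dist (T^[N + 1] x) (T^[m + 1] x) := dist_triangle _ _ _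
        _ < η + ε / 2 := add_lt_add hN hshrink
        _ = ε / 2 + η := add_comm _ _
  refine ⟨N, fun n hn => ?_⟩
  rcases hn.eq_or_lt with rfl | hlt
  · simpa using hε
  · rw [dist_comm]
    linarith [htail n hlt, min_le_right δ (ε / 2)]

end MeirKeelerOn

end MeirKeeler

theorem fixed_point_of_MK_relation_general {X : Type*} [MetricSpace X] [CompleteSpace X]
    (T : X → X) (R : Set (X × X))
    (htrans : ∀ u v w : X, (u, v) ∈ R → (v, w) ∈ R → (u, w) ∈ R)
    (x : X) (hx : (x, T x) ∈ R)
    (hT : ∀ u v : X, (u, v) ∈ R → (T u, T v) ∈ R)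
    (hMK : ∀ ε : ℝ, 0 < ε → ∃ δ : ℝ, 0 < δ ∧ ∀ u v : X, (u, v) ∈ R →
      ε ≤ dist u v → dist u v < ε + δ → dist (T u) (T v) < ε)
    (hcont : ∀ (s : ℕ → X) (y : X), Filter.Tendsto s Filter.atTop (nhds y) →
      (∀ n : ℕ, (s n, s (n + 1)) ∈ R) →
      ∃ φ : ℕ → ℕ, StrictMono φ ∧
        Filter.Tendsto (fun k => T (s (φ k))) Filter.atTop (nhds (T y))) :
    ∃ z : X, Filter.Tendsto (fun n : ℕ => T^[n] x) Filter.atTop (nhds z) ∧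
      T z = z := by
  have hchain := iterate_succ_mem_of_mem_map hx hT
  obtain ⟨z, hz⟩ := cauchySeq_tendsto_of_complete (MeirKeelerOn.cauchySeq_iterate hMK htrans hchain)
  obtain ⟨φ, hφ, hTz⟩ := hcont _ z hz hchain
  refine ⟨z, hz, tendsto_nhds_unique hTz ?_⟩
  simp only [← Function.iterate_succ_apply' T]
  exact hz.comp ((hφ.add_const 1).tendsto_atTop)

theorem fixed_point_of_MK_relation {X : Type*} [MetricSpace X] [CompleteSpace X]
    (T : X → X) (R : Set (X × X)) (hR : R.Nonempty)
    (htrans : ∀ u v w : X, (u, v) ∈ R → (v, w) ∈ R → (u, w) ∈ R)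
    (x : X) (hx : (x, T x) ∈ R)
    (hT : ∀ u v : X, (u, v) ∈ R → (T u, T v) ∈ R)
    (hMK : ∀ ε : ℝ, 0 < ε → ∃ δ : ℝ, 0 < δ ∧ ∀ u v : X, (u, v) ∈ R →
      ε ≤ dist u v → dist u v < ε + δ → dist (T u) (T v) < ε)
    (hcont : ∀ (s : ℕ → X) (y : X), Filter.Tendsto s Filter.atTop (nhds y) →
      (∀ n : ℕ, (s n, s (n + 1)) ∈ R) →
      ∃ φ : ℕ → ℕ, StrictMono φ ∧
        Filter.Tendsto (fun k => T (s (φ k))) Filter.atTop (nhds (T y))) :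
    ∃ z : X, Filter.Tendsto (fun n : ℕ => T^[n] x) Filter.atTop (nhds z) ∧
      T z = z :=
  fixed_point_of_MK_relation_general T R htrans x hx hT hMK hcont
end

section
/- Let X be a complete metric space, T : X → X, and ⪯ a partial order on X. Suppose: (NR1) there exists x ∈ X with x ⪯ Tx; (NR2) u ⪯ v implies Tu ⪯ Tv; (NR3) there exists θ ∈ [0,1) such that d(Tu,Tv) ≤ θ·d(u,v) whenever u ⪯ v; (NR4) if x_n → y and x_n ⪯ x_{n+1} for all n, then x_n ⪯ y for all n. Then T has a fixed point. -/
/-!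
Starting from `x ≤ T x`, monotonicity makes the Picard orbit `Tⁿ x` an increasing chain, so
consecutive terms are comparable and the contraction bound applies to them: the steps shrink
geometrically and the orbit converges to some `z`. By (NR4) every `Tⁿ x` lies below `z`, so the
contraction bound applies to the pairs `(Tⁿ x, z)` as well, which forces `Tⁿ⁺¹ x → T z`;
uniqueness of limits gives `T z = z`.
-/

open Filter Topology

section OrderedContraction

variable {X : Type*} [PseudoMetricSpace X] [Preorder X] {T : X → X} {θ : ℝ}

theorem dist_iterate_succ_le_geometric_of_monotone (hT : Monotone T) (hθ0 : 0 ≤ θ)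
    (hθ : ∀ u v, u ≤ v → dist (T u) (T v) ≤ θ * dist u v) {x : X} (hx : x ≤ T x) (n : ℕ) :
    dist (T^[n] x) (T^[n + 1] x) ≤ dist x (T x) * θ ^ n := by
  induction n with
  | zero => simp
  | succ n ih =>
    have hle : T^[n] x ≤ T^[n + 1] x := hT.monotone_iterate_of_le_map hx n.le_succ
    rw [Function.iterate_succ_apply' T n, Function.iterate_succ_apply' T (n + 1)]
    calc dist (T (T^[n] x)) (T (T^[n + 1] x)) ≤ θ * dist (T^[n] x) (T^[n + 1] x) := hθ _ _ hle
      _ ≤ θ * (dist x (T x) * θ ^ n) := mul_le_mul_of_nonneg_left ih hθ0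
      _ = dist x (T x) * θ ^ (n + 1) := by ring

theorem cauchySeq_iterate_of_monotone (hT : Monotone T) (hθ0 : 0 ≤ θ) (hθ1 : θ < 1)
    (hθ : ∀ u v, u ≤ v → dist (T u) (T v) ≤ θ * dist u v) {x : X} (hx : x ≤ T x) :
    CauchySeq fun n => T^[n] x :=
  cauchySeq_of_le_geometric θ _ hθ1 (dist_iterate_succ_le_geometric_of_monotone hT hθ0 hθ hx)

theorem tendsto_comp_of_le_limit (hθ : ∀ u v, u ≤ v → dist (T u) (T v) ≤ θ * dist u v)
    {ι : Type*} {l : Filter ι} {s : ι → X} {z : X} (hs : Tendsto s l (𝓝 z))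
    (hle : ∀ i, s i ≤ z) : Tendsto (T ∘ s) l (𝓝 (T z)) := by
  rw [tendsto_iff_dist_tendsto_zero] at hs ⊢
  have hθs : Tendsto (fun i => θ * dist (s i) z) l (𝓝 0) := by
    simpa using hs.const_mul θ
  exact squeeze_zero (fun _ => dist_nonneg) (fun i => hθ _ _ (hle i)) hθs

end OrderedContraction

theorem nieto_rodriguez_lopez {X : Type*} [MetricSpace X] [CompleteSpace X]
    [PartialOrder X] (T : X → X)
    (hNR1 : ∃ x : X, x ≤ T x)
    (hNR2 : ∀ u v : X, u ≤ v → T u ≤ T v)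
    (hNR3 : ∃ θ : ℝ, 0 ≤ θ ∧ θ < 1 ∧ ∀ u v : X, u ≤ v →
      dist (T u) (T v) ≤ θ * dist u v)
    (hNR4 : ∀ (s : ℕ → X) (y : X), Filter.Tendsto s Filter.atTop (nhds y) →
      (∀ n : ℕ, s n ≤ s (n + 1)) → ∀ n : ℕ, s n ≤ y) :
    ∃ z : X, T z = z := by
  obtain ⟨x, hx⟩ := hNR1
  obtain ⟨θ, hθ0, hθ1, hθ⟩ := hNR3
  have hT : Monotone T := hNR2
  obtain ⟨z, hz⟩ :=
    cauchySeq_tendsto_of_complete (cauchySeq_iterate_of_monotone hT hθ0 hθ1 hθ hx)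
  have hle : ∀ n, T^[n] x ≤ z :=
    hNR4 _ z hz fun n => hT.monotone_iterate_of_le_map hx n.le_succ
  have hshift : Tendsto (fun n => T^[n + 1] x) atTop (𝓝 z) :=
    (tendsto_add_atTop_iff_nat 1).mpr hz
  simp only [Function.iterate_succ_apply'] at hshift
  exact ⟨z, tendsto_nhds_unique (tendsto_comp_of_le_limit hθ hz hle) hshift⟩
end
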